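/- Let I and J be nonempty finite types and C : I → J → ℂ with ∑_{p ∈ I} ∑_{β ∈ J} |C p β|² = 1. Suppose that for all p, p' ∈ I and β, β' ∈ J one has conj(C p' β') · (C p β) = (∑_{α ∈ J} conj(C p' α) · (C p α)) · (∑_{k ∈ I} conj(C k β') · (C k β)). Then there exist functions f : I → ℂ and g : J → ℂ such that C p β = f p · g β for all p ∈ I and β ∈ J. -/
import Mathlib


open scoped BigOperators

/-- coefficient-factorization core of the paper's Proposition 1:
if a normalized coefficient matrix satisfies the separability identity
`conj(C p' β') · C p β = (∑_α conj(C p' α) · C p α) · (∑_k conj(C k β') · C k β)`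
for all indices, then it factorizes as `C p β = f p · g β`. -/
theorem coefficient_matrix_factorizes
    {I J : Type*} [Fintype I] [Nonempty I] [Fintype J] [Nonempty J]
    (C : I → J → ℂ)
    (hnorm : ∑ p, ∑ β, Complex.normSq (C p β) = 1)
    (hsep : ∀ (p p' : I) (β β' : J),
      starRingEnd ℂ (C p' β') * C p β =
        (∑ α, starRingEnd ℂ (C p' α) * C p α) * (∑ k, starRingEnd ℂ (C k β') * C k β)) :
    ∃ (f : I → ℂ) (g : J → ℂ), ∀ p β, C p β = f p * g β := by
  -- there is some nonzero entry, since the squared norms sum to 1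
  have hne : ∃ p0 β0, C p0 β0 ≠ 0 := by
    by_contra h
    push_neg at h
    simp only [h, Complex.normSq_zero, Finset.sum_const_zero] at hnorm
    exact one_ne_zero hnorm.symm
  obtain ⟨p0, β0, h0⟩ := hne
  have hc0 : starRingEnd ℂ (C p0 β0) ≠ 0 := by
    simpa using h0
  refine ⟨fun p => (∑ α, starRingEnd ℂ (C p0 α) * C p α) / starRingEnd ℂ (C p0 β0),
    fun β => ∑ k, starRingEnd ℂ (C k β0) * C k β, fun p β => ?_⟩
  have h := hsep p p0 β β0
  field_simp
  rw [mul_comm (C p β), h]
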